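/- arXiv:1306.0027 — 6 statements merged into one kernel-verified Lean document; each statement's English description precedes it below -/
import Mathlib

section
/- Over the rational function field Q(v), the discriminant of the quadratic x^2 + (6c - 3c^2 + 1)x - 16c^3 in x, namely Δ = (1+c)^3(1+9c), becomes a perfect square when c = (1 - v^2)/(2(3v - 5)): with this substitution Δ is the square of a rational function of v. -/
open RatFunc in
/-- With `c = (1 - v²)/(2(3v - 5))` in `ℚ(v)`, the discriminant
`Δ = (1+c)³(1+9c)` of the quadratic `x² + (6c - 3c² + 1)x - 16c³`
is the square of a rational function of `v`. -/
theorem stmt4 :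
    ∃ f : RatFunc ℚ,
      (1 + (1 - X ^ 2) / (2 * (3 * X - 5))) ^ 3 *
        (1 + 9 * ((1 - X ^ 2) / (2 * (3 * X - 5)))) = f ^ 2 := by
  have hX : (3 * (X : RatFunc ℚ) - 5) ≠ 0 := by
    have h : (3 * (X : RatFunc ℚ) - 5) =
        algebraMap (Polynomial ℚ) (RatFunc ℚ) (3 * Polynomial.X - 5) := by
      simp [map_sub, map_mul, map_ofNat, RatFunc.algebraMap_X]
    rw [h]
    apply RatFunc.algebraMap_ne_zero
    intro h0
    have h5 : (3 * Polynomial.X - 5 : Polynomial ℚ).coeff 1 = 3 := by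
      simp [Polynomial.coeff_sub]
    rw [h0] at h5
    simp at h5
  have hd : (2 * (3 * (X : RatFunc ℚ) - 5)) ≠ 0 := by
    have h2 : (2 : RatFunc ℚ) ≠ 0 := by
      have : (2 : RatFunc ℚ) = algebraMap (Polynomial ℚ) (RatFunc ℚ) 2 :=
        (map_ofNat _ 2).symm
      rw [this]
      exact RatFunc.algebraMap_ne_zero (by norm_num)
    exact mul_ne_zero h2 hX
  refine ⟨(X - 3) ^ 3 * (3 * X - 1) / (2 * (3 * X - 5)) ^ 2, ?_⟩
  have hX' : (X : RatFunc ℚ) * 3 - 5 ≠ 0 := by rwa [mul_comm]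
  field_simp
  ring
end

section
/- For rational v (outside finitely many exceptions), the cubic x^3 + A x^2 + B x with A = 37 - 84v + 102v^2 - 36v^3 - 3v^4 and B = 32(v-1)^3(v+1)^3(3v-5) splits into three linear factors over Q. -/
namespace Polynomial

theorem X_mul_X_sub_C_mul_X_sub_C {R : Type*} [CommRing R] (r s : R) :
    X * (X - C r) * (X - C s) = X ^ 3 + C (-(r + s)) * X ^ 2 + C (r * s) * X := by
  simp only [map_neg, map_add, map_mul]
  ring

end Polynomial

open Polynomial in
/-- For all rational `v` outside finitely many exceptions, the cubic
`x³ + A₂₆(v)x² + B₂₆(v)x`, where `A₂₆(v) = 37 - 84v + 102v² - 36v³ - 3v⁴` and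
`B₂₆(v) = 32(v-1)³(v+1)³(3v-5)`, splits into three linear factors over `ℚ`. -/
theorem stmt5 : ∃ S : Set ℚ, S.Finite ∧ ∀ v : ℚ, v ∉ S →
    ∃ r s : ℚ,
      X ^ 3 + C (37 - 84 * v + 102 * v ^ 2 - 36 * v ^ 3 - 3 * v ^ 4) * X ^ 2 +
        C (32 * (v - 1) ^ 3 * (v + 1) ^ 3 * (3 * v - 5)) * X =
      X * (X - C r) * (X - C s) := by
  refine ⟨∅, Set.finite_empty, fun v _ => ⟨(v + 1) ^ 3 * (3 * v - 5), 32 * (v - 1) ^ 3, ?_⟩⟩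
  have hA : 37 - 84 * v + 102 * v ^ 2 - 36 * v ^ 3 - 3 * v ^ 4 =
      -((v + 1) ^ 3 * (3 * v - 5) + 32 * (v - 1) ^ 3) := by ring
  have hB : 32 * (v - 1) ^ 3 * (v + 1) ^ 3 * (3 * v - 5) =
      (v + 1) ^ 3 * (3 * v - 5) * (32 * (v - 1) ^ 3) := by ring
  rw [hA, hB, X_mul_X_sub_C_mul_X_sub_C]
end

section
/- The point with x-coordinate X = ((w-1)^2(w+1)^2(5+7w^2)^2(11+25w^2))/16 lies on the curve y^2 = x^3 + AA x^2 + BB x over Q(w) with AA = -31 - 148w^2 + 214w^4 - 116w^6 + 337w^8, BB = 256(w-1)^4(w+1)^4(1+3w^2)^4, if and only if 11 + 25w^2 times a certain square is itself a square; in particular for w = (11 - u^2)/(10u) the value X(w) is the x-coordinate of a rational point on the specialized curve for all but finitely many rational u. -/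
/-!
Write `X = P² (11 + 25w²) / 16` with `P = (w² - 1)(5 + 7w²)`. The cubic `X³ + AA X² + BB X`
factors as `X (X² + AA X + BB)`, and the quadratic factor is a perfect square in `ℚ[w]`, namely
`((w² - 1)(5w² - 1)²(w² + 3)(49w² + 23) / 16)²`. So the cubic is `11 + 25w²` times a square, and
`X` is the abscissa of a point as soon as `11 + 25w²` is a square. The conic `z² = 11 + 25w²` is
parametrised by `w = (11 - u²)/(10u)`, `z = (11 + u²)/(2u)`, which fails only at `u = 0`.
-/

section Curve

variable {K : Type*} [Field K] [CharZero K]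

def curveA (w : K) : K := -31 - 148 * w ^ 2 + 214 * w ^ 4 - 116 * w ^ 6 + 337 * w ^ 8

def curveB (w : K) : K := 256 * (w - 1) ^ 4 * (w + 1) ^ 4 * (1 + 3 * w ^ 2) ^ 4

def pointX (w : K) : K := (w - 1) ^ 2 * (w + 1) ^ 2 * (5 + 7 * w ^ 2) ^ 2 * (11 + 25 * w ^ 2) / 16

theorem pointX_sq_add_curveA_mul_add_curveB (w : K) :
    pointX w ^ 2 + curveA w * pointX w + curveB w =
      ((w ^ 2 - 1) * (5 * w ^ 2 - 1) ^ 2 * (w ^ 2 + 3) * (49 * w ^ 2 + 23) / 16) ^ 2 := by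
  unfold pointX curveA curveB
  ring

theorem curve_rhs_pointX_eq_mul_sq (w : K) :
    pointX w ^ 3 + curveA w * pointX w ^ 2 + curveB w * pointX w =
      (11 + 25 * w ^ 2) * ((w ^ 2 - 1) ^ 2 * (5 + 7 * w ^ 2) * (5 * w ^ 2 - 1) ^ 2 * (w ^ 2 + 3) *
        (49 * w ^ 2 + 23) / 64) ^ 2 := by
  have hfactor : pointX w ^ 3 + curveA w * pointX w ^ 2 + curveB w * pointX w =
      pointX w * (pointX w ^ 2 + curveA w * pointX w + curveB w) := by ring
  rw [hfactor, pointX_sq_add_curveA_mul_add_curveB]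
  unfold pointX
  ring

theorem exists_point_of_isSquare {w : K} (h : IsSquare (11 + 25 * w ^ 2)) :
    ∃ y : K, y ^ 2 = pointX w ^ 3 + curveA w * pointX w ^ 2 + curveB w * pointX w := by
  obtain ⟨z, hz⟩ := h
  refine ⟨z * ((w ^ 2 - 1) ^ 2 * (5 + 7 * w ^ 2) * (5 * w ^ 2 - 1) ^ 2 * (w ^ 2 + 3) *
    (49 * w ^ 2 + 23) / 64), ?_⟩
  rw [curve_rhs_pointX_eq_mul_sq, hz]
  ring

end Curve

theorem add_sq_mul_sq_div_eq_sq {K : Type*} [Field K] {a b u : K} (h2 : (2 : K) ≠ 0)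
    (hb : b ≠ 0) (hu : u ≠ 0) :
    a + b ^ 2 * ((a - u ^ 2) / (2 * b * u)) ^ 2 = ((a + u ^ 2) / (2 * u)) ^ 2 := by
  field_simp
  ring

/-- For all but finitely many rational `u`, setting `w = (11 - u²)/(10u)`, the value
`X = (w-1)²(w+1)²(5+7w²)²(11+25w²)/16` is the `x`-coordinate of a rational point on the
curve `y² = x³ + AA(w)x² + BB(w)x`, where `AA(w) = -31 - 148w² + 214w⁴ - 116w⁶ + 337w⁸`
and `BB(w) = 256(w-1)⁴(w+1)⁴(1+3w²)⁴`. -/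
theorem stmt8 : ∃ S : Set ℚ, S.Finite ∧ ∀ u : ℚ, u ∉ S →
    ∀ w X : ℚ, w = (11 - u ^ 2) / (10 * u) →
      X = (w - 1) ^ 2 * (w + 1) ^ 2 * (5 + 7 * w ^ 2) ^ 2 * (11 + 25 * w ^ 2) / 16 →
      ∃ y : ℚ, y ^ 2 = X ^ 3 +
        (-31 - 148 * w ^ 2 + 214 * w ^ 4 - 116 * w ^ 6 + 337 * w ^ 8) * X ^ 2 +
        (256 * (w - 1) ^ 4 * (w + 1) ^ 4 * (1 + 3 * w ^ 2) ^ 4) * X := by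
  refine ⟨{0}, Set.finite_singleton 0, fun u hu w X hw hX => ?_⟩
  have hw' : w = (11 - u ^ 2) / (2 * 5 * u) := by rw [hw]; norm_num
  have hsq : IsSquare (11 + 25 * w ^ 2) :=
    ⟨(11 + u ^ 2) / (2 * u), by
      rw [hw', ← sq, show (25 : ℚ) = 5 ^ 2 by norm_num]
      exact add_sq_mul_sq_div_eq_sq two_ne_zero (by norm_num) hu⟩
  subst hX
  exact exists_point_of_isSquare hsq
end

section
/- The quartic equation t^2 = 3509 + 62r^2 + 29r^4 has the rational solution (r,t) = (1,60), and the equation 319 + 290r − 29r^2 − 120rs − 11s^2 + 10rs^2 + r^2s^2 = 0 has a rational solution s (in terms of r) whenever 3509 + 62r^2 + 29r^4 is a rational square and r^2 + 10r − 11 ≠ 0. -/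
/-! Viewed as a quadratic in `s`, the second equation has leading coefficient `r² + 10r - 11` and
discriminant `4 (3509 + 62r² + 29r⁴)`, so a square root `t` of the quartic gives the root
`s = (60r + t) / (r² + 10r - 11)`. -/

theorem discrim_eq_four_mul_quartic {R : Type*} [CommRing R] (r : R) :
    discrim (r ^ 2 + 10 * r - 11) (-120 * r) (319 + 290 * r - 29 * r ^ 2) =
      4 * (3509 + 62 * r ^ 2 + 29 * r ^ 4) := by
  unfold discrim
  ring

theorem exists_root_of_quartic_eq_sq {K : Type*} [Field K] [NeZero (2 : K)] {r t : K}
    (ht : t ^ 2 = 3509 + 62 * r ^ 2 + 29 * r ^ 4) (ha : r ^ 2 + 10 * r - 11 ≠ 0) :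
    ∃ s : K, 319 + 290 * r - 29 * r ^ 2 - 120 * r * s - 11 * s ^ 2 +
      10 * r * s ^ 2 + r ^ 2 * s ^ 2 = 0 := by
  have hdiscrim : discrim (r ^ 2 + 10 * r - 11) (-120 * r) (319 + 290 * r - 29 * r ^ 2) =
      (2 * t) * (2 * t) := by
    rw [discrim_eq_four_mul_quartic, ← ht]
    ring
  obtain ⟨s, hs⟩ := exists_quadratic_eq_zero ha ⟨2 * t, hdiscrim⟩
  exact ⟨s, by linear_combination hs⟩

/-- The quartic `t² = 3509 + 62r² + 29r⁴` has the rational solution `(r,t) = (1,60)`, and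
`319 + 290r - 29r² - 120rs - 11s² + 10rs² + r²s² = 0` has a rational solution `s` whenever
`3509 + 62r² + 29r⁴` is a rational square and `r² + 10r - 11 ≠ 0`. -/
theorem stmt14 :
    ((60 : ℚ) ^ 2 = 3509 + 62 * 1 ^ 2 + 29 * 1 ^ 4) ∧
    ∀ r : ℚ, (∃ t : ℚ, t ^ 2 = 3509 + 62 * r ^ 2 + 29 * r ^ 4) →
      r ^ 2 + 10 * r - 11 ≠ 0 →
      ∃ s : ℚ, 319 + 290 * r - 29 * r ^ 2 - 120 * r * s - 11 * s ^ 2 +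
        10 * r * s ^ 2 + r ^ 2 * s ^ 2 = 0 := by
  refine ⟨by norm_num, ?_⟩
  rintro r ⟨t, ht⟩ ha
  exact exists_root_of_quartic_eq_sq ht ha
end

section
/- The quartic equation t^2 = 49 − 7r + 20r^2 + r^3 + r^4 has the rational solution (r,t) = (1,8), and whenever 49 − 7r + 20r^2 + r^3 + r^4 is a rational square and 21 + 2r + r^2 ≠ 0, the equation −35 + 10r − 15r^2 − 14s − 4rs + 2r^2s + 21s^2 + 2rs^2 + r^2s^2 = 0 has a rational solution s. -/
/-! As a quadratic in `s`, the equation has discriminant `8²` times the quartic, so a rational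
point `(r, t)` on the quartic gives the rational square root `8t`, and the quadratic formula a
rational root `s`. -/

lemma discrim_eq_sq_mul_quartic {R : Type*} [CommRing R] (r : R) :
    discrim (21 + 2 * r + r ^ 2) (2 * r ^ 2 - 4 * r - 14) (-35 + 10 * r - 15 * r ^ 2) =
      8 ^ 2 * (49 - 7 * r + 20 * r ^ 2 + r ^ 3 + r ^ 4) := by
  rw [discrim]
  ring

/-- The quartic `t² = 49 - 7r + 20r² + r³ + r⁴` has the rational solution `(r,t) = (1,8)`,
and whenever `49 - 7r + 20r² + r³ + r⁴` is a rational square and `21 + 2r + r² ≠ 0`, the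
equation `-35 + 10r - 15r² - 14s - 4rs + 2r²s + 21s² + 2rs² + r²s² = 0` has a rational
solution `s`. -/
theorem stmt15 :
    ((8 : ℚ) ^ 2 = 49 - 7 * 1 + 20 * 1 ^ 2 + 1 ^ 3 + 1 ^ 4) ∧
    ∀ r : ℚ, (∃ t : ℚ, t ^ 2 = 49 - 7 * r + 20 * r ^ 2 + r ^ 3 + r ^ 4) →
      21 + 2 * r + r ^ 2 ≠ 0 →
      ∃ s : ℚ, -35 + 10 * r - 15 * r ^ 2 - 14 * s - 4 * r * s + 2 * r ^ 2 * s +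
        21 * s ^ 2 + 2 * r * s ^ 2 + r ^ 2 * s ^ 2 = 0 := by
  refine ⟨by norm_num, ?_⟩
  rintro r ⟨t, ht⟩ ha
  have hdiscrim : discrim (21 + 2 * r + r ^ 2) (2 * r ^ 2 - 4 * r - 14)
      (-35 + 10 * r - 15 * r ^ 2) = (8 * t) * (8 * t) := by
    rw [discrim_eq_sq_mul_quartic, ← ht]
    ring
  obtain ⟨s, hs⟩ := exists_quadratic_eq_zero ha ⟨8 * t, hdiscrim⟩
  exact ⟨s, by linear_combination hs⟩
end

section
/- The elliptic curve y^2 = x^3 − 43x^2 + 280x over Q has positive Mordell–Weil rank; in particular it has infinitely many rational points. -/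
/-- The elliptic curve `y² = x³ - 43x² + 280x` over `ℚ`. -/
def curve43 : WeierstrassCurve.Affine ℚ :=
  { a₁ := 0, a₂ := -43, a₃ := 0, a₄ := 280, a₆ := 0 }

/-!
Doubling a point `(x, y)` with `|x|₂ = s²`, `|y|₂ = s³` and `s > 1` gives a point with
`|x|₂ = (2s)²`, `|y|₂ = (2s)³`, on any curve `y² = x³ + a₂x² + a₄x + a₆` with `2`-integral `a₂, a₄`:
the tangent slope `(3x² + 2a₂x + a₄) / 2y` has norm `s⁴ / (s³/2) = 2s`, and its square dominates
the other terms of the new coordinates. The point `(5/4, 135/8)` of `curve43` has `s = 2`, so its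
iterated doubles `2ᵏ • P` are pairwise distinct (`s = 2ᵏ⁺¹`), and `P` has infinite order.
-/

open WeierstrassCurve.Affine

namespace padicNorm

variable {p : ℕ} [Fact p.Prime]

theorem add_eq_left_of_lt {q r : ℚ} (h : padicNorm p r < padicNorm p q) :
    padicNorm p (q + r) = padicNorm p q := by
  rw [add_eq_max_of_ne h.ne', max_eq_left h.le]

theorem add_lt_of_lt {q r c : ℚ} (hq : padicNorm p q < c) (hr : padicNorm p r < c) :
    padicNorm p (q + r) < c :=
  padicNorm.nonarchimedean.trans_lt (max_lt hq hr)

theorem two_two : padicNorm 2 2 = 1 / 2 := by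
  simpa using padicNorm_p_of_prime (p := 2)

theorem natCast_eq_one_of_odd {n : ℕ} (hn : Odd n) : padicNorm 2 n = 1 :=
  (nat_eq_one_iff n).2 hn.not_two_dvd_nat

end padicNorm

section Doubling

variable {a₂ a₄ x y s : ℚ}

theorem padicNorm_tangent_slope (ha₂ : padicNorm 2 a₂ ≤ 1) (ha₄ : padicNorm 2 a₄ ≤ 1)
    (hs : 1 < s) (hx : padicNorm 2 x = s ^ 2) (hy : padicNorm 2 y = s ^ 3) :
    padicNorm 2 ((3 * x ^ 2 + (2 * a₂ * x + a₄)) / (2 * y)) = 2 * s := by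
  have h3 : padicNorm 2 3 = 1 := mod_cast padicNorm.natCast_eq_one_of_odd (n := 3) (by decide)
  have hlead : padicNorm 2 (3 * x ^ 2) = s ^ 4 := by
    rw [padicNorm.mul, pow_two, padicNorm.mul, h3, hx]; ring
  have hrest : padicNorm 2 (2 * a₂ * x + a₄) < s ^ 4 := by
    refine padicNorm.add_lt_of_lt ?_ (by nlinarith [one_lt_pow₀ hs four_ne_zero])
    rw [padicNorm.mul, padicNorm.mul, padicNorm.two_two, hx]
    nlinarith [pow_lt_pow_right₀ hs (show 2 < 4 by norm_num), padicNorm.nonneg (p := 2) a₂]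
  rw [padicNorm.div, padicNorm.add_eq_left_of_lt (hlead ▸ hrest), hlead, padicNorm.mul,
    padicNorm.two_two, hy]
  field_simp [(by linarith : s ≠ 0)]

variable {ℓ X : ℚ}

theorem padicNorm_double_x (ha₂ : padicNorm 2 a₂ ≤ 1) (hs : 1 < s)
    (hx : padicNorm 2 x = s ^ 2) (hℓ : padicNorm 2 ℓ = 2 * s) :
    padicNorm 2 (ℓ ^ 2 + (-a₂ + -(2 * x))) = (2 * s) ^ 2 := by
  have hlead : padicNorm 2 (ℓ ^ 2) = (2 * s) ^ 2 := by
    rw [pow_two, padicNorm.mul, hℓ]; ring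
  have hrest : padicNorm 2 (-a₂ + -(2 * x)) < (2 * s) ^ 2 := by
    refine padicNorm.add_lt_of_lt ?_ ?_
    · rw [padicNorm.neg]; nlinarith
    · rw [padicNorm.neg, padicNorm.mul, padicNorm.two_two, hx]; nlinarith
  rw [padicNorm.add_eq_left_of_lt (hlead ▸ hrest), hlead]

theorem padicNorm_double_y (hs : 1 < s) (hx : padicNorm 2 x = s ^ 2)
    (hy : padicNorm 2 y = s ^ 3) (hℓ : padicNorm 2 ℓ = 2 * s)
    (hX : padicNorm 2 X = (2 * s) ^ 2) :
    padicNorm 2 (-(ℓ * (X + -x) + y)) = (2 * s) ^ 3 := by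
  have hdiff : padicNorm 2 (X + -x) = (2 * s) ^ 2 := by
    rw [padicNorm.add_eq_left_of_lt (by rw [hX, padicNorm.neg, hx]; nlinarith), hX]
  have hlead : padicNorm 2 (ℓ * (X + -x)) = (2 * s) ^ 3 := by
    rw [padicNorm.mul, hℓ, hdiff]; ring
  have hrest : padicNorm 2 y < (2 * s) ^ 3 := by
    rw [hy]; nlinarith [pow_pos (by linarith : (0 : ℚ) < s) 3]
  rw [padicNorm.neg, padicNorm.add_eq_left_of_lt (hlead ▸ hrest), hlead]

end Doubling

def HasTwoAdicSize (W : WeierstrassCurve.Affine ℚ) (s : ℚ) : W.Point → Prop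
  | .zero => False
  | .some x y _ => padicNorm 2 x = s ^ 2 ∧ padicNorm 2 y = s ^ 3

namespace HasTwoAdicSize

variable {W : WeierstrassCurve.Affine ℚ} {s : ℚ} {P : W.Point}

theorem unique {t : ℚ} (hs : HasTwoAdicSize W s P) (ht : HasTwoAdicSize W t P) : s = t := by
  cases P with
  | zero => exact hs.elim
  | some _ _ _ => exact (Odd.pow_inj (by decide)).1 (hs.2.symm.trans ht.2)

theorem two_nsmul (ha₁ : W.a₁ = 0) (ha₃ : W.a₃ = 0) (ha₂ : padicNorm 2 W.a₂ ≤ 1)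
    (ha₄ : padicNorm 2 W.a₄ ≤ 1) (hs : 1 < s) (hP : HasTwoAdicSize W s P) :
    HasTwoAdicSize W (2 * s) (2 • P) := by
  obtain _ | ⟨x, y, h⟩ := P
  · exact hP.elim
  obtain ⟨hx, hy⟩ := hP
  have hy0 : y ≠ 0 := by
    rintro rfl
    rw [padicNorm.zero] at hy
    exact (pow_pos (by linarith) 3).ne hy
  have hnegY : W.negY x y = -y := by simp [negY, ha₁, ha₃]
  have hyne : y ≠ W.negY x y := by
    rw [hnegY]
    contrapose! hy0
    linarith
  have hℓ : padicNorm 2 (W.slope x x y y) = 2 * s := by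
    rw [slope_of_Y_ne rfl hyne, hnegY, ha₁, ← padicNorm_tangent_slope ha₂ ha₄ hs hx hy]
    ring_nf
  have hX : padicNorm 2 (W.addX x x (W.slope x x y y)) = (2 * s) ^ 2 := by
    rw [← padicNorm_double_x ha₂ hs hx hℓ, addX, ha₁]
    ring_nf
  have hY : padicNorm 2 (W.addY x x y (W.slope x x y y)) = (2 * s) ^ 3 := by
    rw [← padicNorm_double_y hs hx hy hℓ hX, addY, negAddY, negY, ha₁, ha₃]
    ring_nf
  rw [_root_.two_nsmul, Point.add_self_of_Y_ne hyne]
  exact ⟨hX, hY⟩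

theorem two_pow_nsmul (ha₁ : W.a₁ = 0) (ha₃ : W.a₃ = 0) (ha₂ : padicNorm 2 W.a₂ ≤ 1)
    (ha₄ : padicNorm 2 W.a₄ ≤ 1) (hs : 1 < s) (hP : HasTwoAdicSize W s P) (k : ℕ) :
    HasTwoAdicSize W (2 ^ k * s) (2 ^ k • P) := by
  induction k with
  | zero => simpa using hP
  | succ k ih =>
    rw [pow_succ' (2 : ℚ), pow_succ 2, mul_nsmul, mul_assoc]
    exact ih.two_nsmul ha₁ ha₃ ha₂ ha₄ (one_lt_mul_of_le_of_lt (one_le_pow₀ one_le_two) hs)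

theorem injective_two_pow_nsmul (ha₁ : W.a₁ = 0) (ha₃ : W.a₃ = 0)
    (ha₂ : padicNorm 2 W.a₂ ≤ 1) (ha₄ : padicNorm 2 W.a₄ ≤ 1) (hs : 1 < s)
    (hP : HasTwoAdicSize W s P) : Function.Injective fun k : ℕ ↦ 2 ^ k • P := by
  intro i j (hij : 2 ^ i • P = 2 ^ j • P)
  have hsize := (hP.two_pow_nsmul ha₁ ha₃ ha₂ ha₄ hs i).unique
    (hij ▸ hP.two_pow_nsmul ha₁ ha₃ ha₂ ha₄ hs j)
  exact pow_right_injective₀ two_pos (by norm_num) (mul_right_cancel₀ (by linarith) hsize)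

end HasTwoAdicSize

theorem addOrderOf_eq_zero_of_injective_nsmul {M : Type*} [AddMonoid M] {a : M} {f : ℕ → ℕ}
    (hf : Function.Injective fun k ↦ f k • a) : addOrderOf a = 0 := by
  refine addOrderOf_eq_zero_iff.2 fun hfin ↦ Set.infinite_range_of_injective hf ?_
  exact hfin.finite_multiples.subset (Set.range_subset_iff.2 fun k ↦ ⟨f k, rfl⟩)

theorem curve43_nonsingular : curve43.Nonsingular (5 / 4) (135 / 8) := by
  rw [nonsingular_iff, equation_iff]
  norm_num [curve43]

theorem hasTwoAdicSize_curve43 : HasTwoAdicSize curve43 2 (.some _ _ curve43_nonsingular) := by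
  have hodd (n : ℕ) (hn : Odd n) : padicNorm 2 (n : ℚ) = 1 := padicNorm.natCast_eq_one_of_odd hn
  refine ⟨?_, ?_⟩
  · rw [show (5 / 4 : ℚ) = (5 : ℕ) / (2 * 2) by norm_num, padicNorm.div, padicNorm.mul,
      hodd 5 (by decide), padicNorm.two_two]
    norm_num
  · rw [show (135 / 8 : ℚ) = (135 : ℕ) / (2 * 2 * 2) by norm_num, padicNorm.div, padicNorm.mul,
      padicNorm.mul, hodd 135 (by decide), padicNorm.two_two]
    norm_num

/-- The curve `y² = x³ - 43x² + 280x` has positive Mordell–Weil rank: it has a rational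
point of infinite order; in particular it has infinitely many rational points. -/
theorem stmt16 :
    (∃ P : curve43.Point, addOrderOf P = 0) ∧ Infinite curve43.Point := by
  have ha₂ : padicNorm 2 curve43.a₂ ≤ 1 := mod_cast padicNorm.of_int (p := 2) (-43)
  have ha₄ : padicNorm 2 curve43.a₄ ≤ 1 := mod_cast padicNorm.of_int (p := 2) 280
  have hinj := hasTwoAdicSize_curve43.injective_two_pow_nsmul rfl rfl ha₂ ha₄ one_lt_two
  exact ⟨⟨_, addOrderOf_eq_zero_of_injective_nsmul hinj⟩, .of_injective _ hinj⟩
end
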